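/- arXiv:2002.07125 — 5 statements merged into one kernel-verified Lean document; each statement's English description precedes it below -/
import Mathlib

section
/- For any positive semi-definite matrix M in R^{d×d}, any α > 0, and any vector x in R^d such that xᵀ(M + αI)⁻¹x ≤ 1, we have ‖(M(M + αI)⁻¹ − I)x‖₂² ≤ α. -/
/-!
With `A = M + α • 1` and `y = A⁻¹ x` we have `M A⁻¹ - 1 = -α A⁻¹`, so the vector in question is
`-α y` and its squared norm is `α² ‖y‖²`. On the other hand
`xᵀ A⁻¹ x = yᵀ A y = yᵀ M y + α ‖y‖² ≥ α ‖y‖²`, hence `α ‖y‖² ≤ 1` and `α² ‖y‖² ≤ α`.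
-/

open Matrix

namespace Matrix

variable {n : Type*} [Fintype n] [DecidableEq n]

theorem mul_inv_add_smul_one_sub_one {R : Type*} [CommRing R] (M : Matrix n n R) (α : R)
    (h : IsUnit (M + α • 1).det) :
    M * (M + α • 1)⁻¹ - 1 = -α • (M + α • 1)⁻¹ := by
  calc M * (M + α • 1)⁻¹ - 1
      = ((M + α • 1) - α • 1) * (M + α • 1)⁻¹ - 1 := by rw [add_sub_cancel_right]
    _ = -α • (M + α • 1)⁻¹ := by
      rw [sub_mul, mul_nonsing_inv _ h, smul_mul, one_mul]
      module

theorem PosSemidef.isUnit_det_add_smul_one {M : Matrix n n ℝ} (hM : M.PosSemidef) {α : ℝ}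
    (hα : 0 < α) : IsUnit (M + α • 1).det :=
  (isUnit_iff_isUnit_det _).mp (PosDef.posSemidef_add hM (PosDef.one.smul hα)).isUnit

theorem PosSemidef.smul_dotProduct_self_le {M : Matrix n n ℝ} (hM : M.PosSemidef) (α : ℝ)
    (y : n → ℝ) : α * (y ⬝ᵥ y) ≤ y ⬝ᵥ (M + α • 1) *ᵥ y := by
  have hMy : 0 ≤ y ⬝ᵥ M *ᵥ y := by simpa using hM.dotProduct_mulVec_nonneg y
  rw [add_mulVec, dotProduct_add, smul_mulVec, one_mulVec, dotProduct_smul, smul_eq_mul]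
  linarith

theorem PosSemidef.smul_dotProduct_self_inv_mulVec_le {M : Matrix n n ℝ} (hM : M.PosSemidef)
    {α : ℝ} (hα : 0 < α) (x : n → ℝ) :
    α * ((M + α • 1)⁻¹ *ᵥ x ⬝ᵥ (M + α • 1)⁻¹ *ᵥ x) ≤ x ⬝ᵥ (M + α • 1)⁻¹ *ᵥ x := by
  have hA := hM.isUnit_det_add_smul_one hα
  set y := (M + α • 1)⁻¹ *ᵥ x
  have hx : x = (M + α • 1) *ᵥ y := by rw [mulVec_mulVec, mul_nonsing_inv _ hA, one_mulVec]
  calc α * (y ⬝ᵥ y) ≤ y ⬝ᵥ (M + α • 1) *ᵥ y := hM.smul_dotProduct_self_le α y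
    _ = x ⬝ᵥ y := by rw [← hx, dotProduct_comm]

end Matrix

theorem stmt_0 {d : ℕ} (M : Matrix (Fin d) (Fin d) ℝ) (hM : M.PosSemidef)
    (α : ℝ) (hα : 0 < α) (x : Fin d → ℝ)
    (hx : x ⬝ᵥ (M + α • (1 : Matrix (Fin d) (Fin d) ℝ))⁻¹.mulVec x ≤ 1) :
    ∑ i, ((M * (M + α • (1 : Matrix (Fin d) (Fin d) ℝ))⁻¹
        - 1).mulVec x i) ^ 2 ≤ α := by
  have hA := hM.isUnit_det_add_smul_one hα
  set y := (M + α • 1)⁻¹ *ᵥ x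
  have hsum : ∑ i, ((M * (M + α • 1)⁻¹ - 1) *ᵥ x) i ^ 2 = α * (α * (y ⬝ᵥ y)) := by
    rw [mul_inv_add_smul_one_sub_one M α hA, smul_mulVec, dotProduct, Finset.mul_sum,
      Finset.mul_sum]
    refine Finset.sum_congr rfl fun i _ => ?_
    simp only [Pi.smul_apply, smul_eq_mul]
    ring
  calc ∑ i, ((M * (M + α • 1)⁻¹ - 1) *ᵥ x) i ^ 2 = α * (α * (y ⬝ᵥ y)) := hsum
    _ ≤ α * 1 := by
      gcongr
      exact (hM.smul_dotProduct_self_inv_mulVec_le hα x).trans hx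
    _ = α := mul_one α
end

section
/- Let C₀ = (ρ²/16)·I ∈ R^{d×d} with 0 < ρ ≤ 1, and suppose vectors φ₁, …, φ_T ∈ R^d with ‖φ_i‖₂ ≤ 1 are added one at a time, forming C_i = C_{i−1} + φ_i φ_iᵀ, where each added vector satisfies φ_iᵀ C_{i−1}⁻¹ φ_i ≥ 1. Then 2^T · (ρ²/16)^d ≤ (T/d + ρ²/16)^d. -/
/-!
Every update multiplies the determinant by `1 + φᵢᵀ C_{i-1}⁻¹ φᵢ ≥ 2` (matrix determinant lemma)
and raises the trace by `‖φᵢ‖² ≤ 1`, so `2^T det C₀ ≤ det C_T` and `tr C_T ≤ T + d ρ²/16`.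
AM-GM on the eigenvalues of `C_T` gives `det C_T ≤ (tr C_T / d)^d`.
-/

open Matrix Finset

theorem Real.prod_le_sum_div_card_pow {ι : Type*} (s : Finset ι) (z : ι → ℝ)
    (hz : ∀ i ∈ s, 0 ≤ z i) : ∏ i ∈ s, z i ≤ ((∑ i ∈ s, z i) / #s) ^ #s := by
  rcases s.eq_empty_or_nonempty with rfl | hs
  · simp
  have hcard : (#s : ℝ) ≠ 0 := by exact_mod_cast hs.card_pos.ne'
  have hprod : 0 ≤ ∏ i ∈ s, z i := prod_nonneg hz
  have amgm := Real.geom_mean_le_arith_mean s (fun _ ↦ 1) z (fun _ _ ↦ zero_le_one)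
    (by simpa using hs.card_pos) hz
  simp only [Real.rpow_one, one_mul, sum_const, nsmul_eq_mul, mul_one] at amgm
  calc ∏ i ∈ s, z i = ((∏ i ∈ s, z i) ^ (#s : ℝ)⁻¹) ^ #s := by
        rw [← Real.rpow_natCast, ← Real.rpow_mul hprod, inv_mul_cancel₀ hcard, Real.rpow_one]
    _ ≤ ((∑ i ∈ s, z i) / #s) ^ #s := by gcongr

theorem Matrix.PosSemidef.det_le_trace_div_card_pow {n : Type*} [Fintype n] [DecidableEq n]
    {A : Matrix n n ℝ} (hA : A.PosSemidef) :
    A.det ≤ (A.trace / Fintype.card n) ^ Fintype.card n := by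
  have := Real.prod_le_sum_div_card_pow univ hA.1.eigenvalues
    fun i _ ↦ hA.eigenvalues_nonneg i
  simpa [hA.1.det_eq_prod_eigenvalues, hA.1.trace_eq_sum_eigenvalues] using this

theorem Matrix.det_add_vecMulVec {n α : Type*} [Fintype n] [DecidableEq n] [CommRing α]
    {A : Matrix n n α} (hA : IsUnit A.det) (u v : n → α) :
    (A + vecMulVec u v).det = A.det * (1 + v ⬝ᵥ A⁻¹ *ᵥ u) := by
  rw [vecMulVec_eq Unit, det_add_replicateCol_mul_replicateRow hA, ← replicateRow_vecMul,
    det_unique (1 + _ : Matrix Unit Unit α)]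
  simp [replicateRow_mul_replicateCol_apply, dotProduct_mulVec]

section RankOneUpdates

variable {n : Type*} [Fintype n] {T : ℕ} {C : ℕ → Matrix n n ℝ} {φ : ℕ → n → ℝ}

theorem posDef_of_rankOne_updates (h0 : (C 0).PosDef)
    (hrec : ∀ i < T, C (i + 1) = C i + vecMulVec (φ i) (φ i)) :
    ∀ i ≤ T, (C i).PosDef
  | 0, _ => h0
  | i + 1, hi => by
    rw [hrec i hi]
    simpa using (posDef_of_rankOne_updates h0 hrec i (Nat.le_of_succ_le hi)).add_posSemidef
      (posSemidef_vecMulVec_self_star (φ i))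

theorem trace_le_of_rankOne_updates (hφ : ∀ i < T, φ i ⬝ᵥ φ i ≤ 1)
    (hrec : ∀ i < T, C (i + 1) = C i + vecMulVec (φ i) (φ i)) :
    ∀ i ≤ T, (C i).trace ≤ (C 0).trace + i
  | 0, _ => by simp
  | i + 1, hi => by
    have := trace_le_of_rankOne_updates hφ hrec i (Nat.le_of_succ_le hi)
    rw [hrec i hi, trace_add, trace_vecMulVec]
    push_cast
    linarith [hφ i hi]

theorem two_pow_mul_det_le_of_rankOne_updates [DecidableEq n] (h0 : (C 0).PosDef)
    (hrec : ∀ i < T, C (i + 1) = C i + vecMulVec (φ i) (φ i))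
    (hbig : ∀ i < T, 1 ≤ φ i ⬝ᵥ (C i)⁻¹ *ᵥ φ i) :
    ∀ i ≤ T, 2 ^ i * (C 0).det ≤ (C i).det
  | 0, _ => by simp
  | i + 1, hi => by
    have ih := two_pow_mul_det_le_of_rankOne_updates h0 hrec hbig i (Nat.le_of_succ_le hi)
    have hpos := (posDef_of_rankOne_updates h0 hrec i (Nat.le_of_succ_le hi)).det_pos
    rw [hrec i hi, det_add_vecMulVec hpos.ne'.isUnit, pow_succ]
    nlinarith [hbig i hi]

end RankOneUpdates

theorem stmt_2_general {d T : ℕ} (hd : 0 < d) (ρ : ℝ) (hρ0 : 0 < ρ)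
    (C : ℕ → Matrix (Fin d) (Fin d) ℝ) (φ : ℕ → Fin d → ℝ)
    (hC0 : C 0 = (ρ ^ 2 / 16) • (1 : Matrix (Fin d) (Fin d) ℝ))
    (hφ : ∀ i < T, ∑ j, (φ i j) ^ 2 ≤ 1)
    (hrec : ∀ i < T, C (i + 1) = C i + vecMulVec (φ i) (φ i))
    (hbig : ∀ i < T, 1 ≤ φ i ⬝ᵥ (C i)⁻¹.mulVec (φ i)) :
    (2 : ℝ) ^ T * (ρ ^ 2 / 16) ^ d ≤ ((T : ℝ) / d + ρ ^ 2 / 16) ^ d := by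
  set c := ρ ^ 2 / 16
  have h0 : (C 0).PosDef := hC0 ▸ PosDef.one.smul (by positivity)
  have hdet : 2 ^ T * c ^ d ≤ (C T).det := by
    simpa [hC0, det_smul] using two_pow_mul_det_le_of_rankOne_updates h0 hrec hbig T le_rfl
  have htr : (C T).trace ≤ T + d * c := by
    have hφ' : ∀ i < T, φ i ⬝ᵥ φ i ≤ 1 := fun i hi ↦ by simpa [dotProduct, sq] using hφ i hi
    simpa [hC0, add_comm, mul_comm] using trace_le_of_rankOne_updates hφ' hrec T le_rfl
  have hpsd := (posDef_of_rankOne_updates h0 hrec T le_rfl).posSemidef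
  calc 2 ^ T * c ^ d ≤ (C T).det := hdet
    _ ≤ ((C T).trace / d) ^ d := by simpa using hpsd.det_le_trace_div_card_pow
    _ ≤ (T / d + c) ^ d := by
      gcongr
      · exact div_nonneg hpsd.trace_nonneg d.cast_nonneg
      · rw [div_le_iff₀ (by positivity)]
        field_simp
        linarith

theorem stmt_2 {d T : ℕ} (hd : 0 < d) (ρ : ℝ) (hρ0 : 0 < ρ) (hρ1 : ρ ≤ 1)
    (C : ℕ → Matrix (Fin d) (Fin d) ℝ) (φ : ℕ → Fin d → ℝ)
    (hC0 : C 0 = (ρ ^ 2 / 16) • (1 : Matrix (Fin d) (Fin d) ℝ))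
    (hφ : ∀ i < T, ∑ j, (φ i j) ^ 2 ≤ 1)
    (hrec : ∀ i < T, C (i + 1) = C i + vecMulVec (φ i) (φ i))
    (hbig : ∀ i < T, 1 ≤ φ i ⬝ᵥ (C i)⁻¹.mulVec (φ i)) :
    (2 : ℝ) ^ T * (ρ ^ 2 / 16) ^ d ≤ ((T : ℝ) / d + ρ ^ 2 / 16) ^ d :=
  stmt_2_general hd ρ hρ0 C φ hC0 hφ hrec hbig
end

section
/- Let C = ΦΦᵀ + αI where Φ ∈ R^{d×n} has at most n columns, α > 0, θ ∈ R^d with ‖θ‖₂ ≤ 1, and let Y = Φ(Φᵀθ + b) for some vector b ∈ R^n with ‖b‖_∞ ≤ δ. Then for any x ∈ R^d with xᵀC⁻¹x ≤ 1, |xᵀC⁻¹Y − xᵀθ| ≤ √n·δ + √α. -/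
/-!
With `w = C⁻¹ x` the error is `(Φᵀ w) ⬝ b - α (w ⬝ θ)`, and the constraint reads
`xᵀ C⁻¹ x = wᵀ C w = ‖Φᵀ w‖² + α ‖w‖² ≤ 1`. Hence the first term is at most
`‖Φᵀ w‖₁ δ ≤ √n ‖Φᵀ w‖₂ δ ≤ √n δ`, and the second at most
`α ‖w‖ ‖θ‖ ≤ √α · √(α ‖w‖²) ≤ √α`.
-/

open Matrix

namespace Matrix

variable {m ι R : Type*} [Fintype m] [Fintype ι]

theorem IsSymm.dotProduct_mulVec_comm [CommSemiring R] {M : Matrix m m R} (hM : M.IsSymm)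
    (u v : m → R) : u ⬝ᵥ M *ᵥ v = (M *ᵥ u) ⬝ᵥ v := by
  rw [dotProduct_mulVec, ← mulVec_transpose, hM.eq]

section Ridge

variable [DecidableEq m] [CommRing R] (Φ : Matrix m ι R) (α : R)

theorem dotProduct_mul_transpose_add_smul_one_mulVec (w u : m → R) :
    w ⬝ᵥ (Φ * Φᵀ + α • 1) *ᵥ u =
      (Φᵀ *ᵥ w) ⬝ᵥ (Φᵀ *ᵥ u) + α * (w ⬝ᵥ u) := by
  rw [add_mulVec, dotProduct_add, ← mulVec_mulVec, dotProduct_mulVec, ← mulVec_transpose,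
    smul_mulVec, one_mulVec, dotProduct_smul, smul_eq_mul]

theorem dotProduct_mulVec_transpose_mulVec_add_sub (w θ : m → R) (b : ι → R) :
    w ⬝ᵥ Φ *ᵥ (Φᵀ *ᵥ θ + b) - w ⬝ᵥ (Φ * Φᵀ + α • 1) *ᵥ θ =
      (Φᵀ *ᵥ w) ⬝ᵥ b - α * (w ⬝ᵥ θ) := by
  rw [dotProduct_mul_transpose_add_smul_one_mulVec, mulVec_add, dotProduct_add,
    dotProduct_mulVec w Φ, ← mulVec_transpose, dotProduct_mulVec w Φ, ← mulVec_transpose]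
  ring

end Ridge

theorem posDef_mul_transpose_add_smul_one [DecidableEq m] (Φ : Matrix m ι ℝ) {α : ℝ}
    (hα : 0 < α) :
    (Φ * Φᵀ + α • 1).PosDef := by
  refine PosDef.posSemidef_add ?_ (PosDef.one.smul hα)
  simpa only [conjTranspose_eq_transpose_of_trivial] using posSemidef_self_mul_conjTranspose Φ

end Matrix

theorem sum_abs_le_sqrt_card {ι : Type*} [Fintype ι] {v : ι → ℝ} (hv : v ⬝ᵥ v ≤ 1) :
    ∑ i, |v i| ≤ √(Fintype.card ι) := by
  refine le_trans (le_abs_self _) (Real.abs_le_sqrt ?_)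
  calc (∑ i, |v i|) ^ 2 ≤ Fintype.card ι * ∑ i, |v i| ^ 2 := sq_sum_le_card_mul_sum_sq
    _ ≤ Fintype.card ι * 1 := by
      gcongr
      simp only [sq_abs]
      simpa only [dotProduct, sq] using hv
    _ = Fintype.card ι := mul_one _

theorem abs_dotProduct_le_sqrt_card_mul {ι : Type*} [Fintype ι] {v b : ι → ℝ} {δ : ℝ}
    (hv : v ⬝ᵥ v ≤ 1) (hb : ∀ i, |b i| ≤ δ) : |v ⬝ᵥ b| ≤ √(Fintype.card ι) * δ := by
  cases isEmpty_or_nonempty ι with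
  | inl _ => simp
  | inr h =>
    have hδ : 0 ≤ δ := (abs_nonneg _).trans (hb h.some)
    calc |v ⬝ᵥ b| ≤ ∑ i, |v i * b i| := Finset.abs_sum_le_sum_abs _ _
      _ ≤ ∑ i, |v i| * δ := by
        gcongr with i
        rw [abs_mul]
        exact mul_le_mul_of_nonneg_left (hb i) (abs_nonneg _)
      _ = (∑ i, |v i|) * δ := (Finset.sum_mul ..).symm
      _ ≤ √(Fintype.card ι) * δ := by gcongr; exact sum_abs_le_sqrt_card hv

theorem abs_mul_dotProduct_le_sqrt {ι : Type*} [Fintype ι] {w θ : ι → ℝ} {α : ℝ}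
    (hα : 0 ≤ α) (hw : α * (w ⬝ᵥ w) ≤ 1) (hθ : θ ⬝ᵥ θ ≤ 1) : |α * (w ⬝ᵥ θ)| ≤ √α := by
  refine Real.abs_le_sqrt ?_
  have hcs : (w ⬝ᵥ θ) ^ 2 ≤ (w ⬝ᵥ w) * (θ ⬝ᵥ θ) := by
    simpa only [dotProduct, sq] using Finset.sum_mul_sq_le_sq_mul_sq Finset.univ w θ
  have hww : 0 ≤ w ⬝ᵥ w := Finset.sum_nonneg fun i _ => mul_self_nonneg (w i)
  calc (α * (w ⬝ᵥ θ)) ^ 2 = α ^ 2 * (w ⬝ᵥ θ) ^ 2 := by ring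
    _ ≤ α ^ 2 * ((w ⬝ᵥ w) * (θ ⬝ᵥ θ)) := by gcongr
    _ ≤ α ^ 2 * (w ⬝ᵥ w) := by gcongr; exact mul_le_of_le_one_right hww hθ
    _ = α * (α * (w ⬝ᵥ w)) := by ring
    _ ≤ α := mul_le_of_le_one_right hα hw

theorem stmt_7 {d n : ℕ} (Φ : Matrix (Fin d) (Fin n) ℝ)
    (α : ℝ) (hα : 0 < α)
    (C : Matrix (Fin d) (Fin d) ℝ)
    (hC : C = Φ * Φᵀ + α • (1 : Matrix (Fin d) (Fin d) ℝ))
    (θ : Fin d → ℝ) (hθ : ∑ i, (θ i) ^ 2 ≤ 1)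
    (b : Fin n → ℝ) (δ : ℝ) (hb : ∀ i, |b i| ≤ δ)
    (Y : Fin d → ℝ) (hY : Y = Φ.mulVec (Φᵀ.mulVec θ + b))
    (x : Fin d → ℝ) (hx : x ⬝ᵥ C⁻¹.mulVec x ≤ 1) :
    |x ⬝ᵥ C⁻¹.mulVec Y - x ⬝ᵥ θ| ≤ Real.sqrt n * δ + Real.sqrt α := by
  have hCpd : C.PosDef := hC ▸ posDef_mul_transpose_add_smul_one Φ hα
  have hCsymm : C.IsSymm := isHermitian_iff_isSymm.mp hCpd.isHermitian
  set w := C⁻¹ *ᵥ x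
  have hCw : C *ᵥ w = x := by
    rw [mulVec_mulVec, mul_nonsing_inv C ((isUnit_iff_isUnit_det C).mp hCpd.isUnit), one_mulVec]
  have hquad : (Φᵀ *ᵥ w) ⬝ᵥ (Φᵀ *ᵥ w) + α * (w ⬝ᵥ w) ≤ 1 := by
    rwa [← dotProduct_mul_transpose_add_smul_one_mulVec, ← hC, hCw, dotProduct_comm]
  have hres : x ⬝ᵥ C⁻¹ *ᵥ Y - x ⬝ᵥ θ = (Φᵀ *ᵥ w) ⬝ᵥ b - α * (w ⬝ᵥ θ) := by
    rw [← dotProduct_mulVec_transpose_mulVec_add_sub, ← hC, ← hY,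
      hCsymm.dotProduct_mulVec_comm, hCw, hCsymm.inv.dotProduct_mulVec_comm]
  have hΦw := dotProduct_self_star_nonneg (Φᵀ *ᵥ w)
  have hαw := mul_nonneg hα.le (dotProduct_self_star_nonneg w)
  simp only [star_trivial] at hΦw hαw
  rw [hres]
  calc _ ≤ |(Φᵀ *ᵥ w) ⬝ᵥ b| + |α * (w ⬝ᵥ θ)| := abs_sub _ _
    _ ≤ √n * δ + √α := by
      gcongr
      · simpa only [Fintype.card_fin] using abs_dotProduct_le_sqrt_card_mul (by linarith) hb
      · exact abs_mul_dotProduct_le_sqrt hα.le (by linarith)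
          (by simpa only [dotProduct, sq] using hθ)
end

section
/- Fix a function class F of functions from a set X to R, and a real ε > 0. Suppose x₁, …, x_n ∈ X is a sequence such that for each j there exist f₁, f₂ ∈ F with |f₁(x_j) − f₂(x_j)| > ε and Σ_{i<j} |f₁(x_i) − f₂(x_i)|² ≤ (j−1)·β². Then for each j, the number K of disjoint subsequences of (x₁,…,x_{j−1}) on which x_j is ε-dependent satisfies K ≤ (j−1)·β²/ε². -/
/-- `z` is `ε`-dependent (w.r.t. the function class `F`) on the subsequence of
the points `x i`, `i ∈ s`. -/
def EpsDependentOn {X ι : Type*} (F : Set (X → ℝ)) (ε : ℝ) (z : X)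
    (s : Finset ι) (x : ι → X) : Prop :=
  ∀ f₁ ∈ F, ∀ f₂ ∈ F,
    (∑ i ∈ s, (f₁ (x i) - f₂ (x i)) ^ 2) ≤ ε ^ 2 → (f₁ z - f₂ z) ^ 2 ≤ ε ^ 2

theorem stmt_9 {X : Type*} (F : Set (X → ℝ)) (ε β : ℝ) (hε : 0 < ε)
    {n : ℕ} (x : Fin n → X) (j : Fin n)
    (f₁ f₂ : X → ℝ) (hf₁ : f₁ ∈ F) (hf₂ : f₂ ∈ F)
    (hwit : ε < |f₁ (x j) - f₂ (x j)|)
    (hsum : ∑ i ∈ Finset.univ.filter (· < j), (f₁ (x i) - f₂ (x i)) ^ 2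
        ≤ (j : ℝ) * β ^ 2)
    (K : ℕ) (B : Fin K → Finset (Fin n))
    (hsub : ∀ k, B k ⊆ Finset.univ.filter (· < j))
    (hdisj : Pairwise (Function.onFun Disjoint B))
    (hdep : ∀ k, EpsDependentOn F ε (x j) (B k) x) :
    (K : ℝ) ≤ (j : ℝ) * β ^ 2 / ε ^ 2 := by
  have hε2 : (0:ℝ) < ε ^ 2 := pow_pos hε 2
  have hwit2 : ε ^ 2 < (f₁ (x j) - f₂ (x j)) ^ 2 := by
    calc ε ^ 2 < |f₁ (x j) - f₂ (x j)| ^ 2 := by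
          exact pow_lt_pow_left₀ hwit hε.le (by norm_num)
      _ = (f₁ (x j) - f₂ (x j)) ^ 2 := sq_abs _
  have hk : ∀ k, ε ^ 2 ≤ ∑ i ∈ B k, (f₁ (x i) - f₂ (x i)) ^ 2 := by
    intro k
    by_contra h
    push_neg at h
    have := hdep k f₁ hf₁ f₂ hf₂ h.le
    linarith
  have hbi : (K : ℝ) * ε ^ 2 ≤ ∑ i ∈ Finset.univ.biUnion B, (f₁ (x i) - f₂ (x i)) ^ 2 := by
    rw [Finset.sum_biUnion (fun a _ b _ hab => hdisj hab)]
    calc (K : ℝ) * ε ^ 2 = ∑ _k : Fin K, ε ^ 2 := by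
          simp [mul_comm]
      _ ≤ _ := Finset.sum_le_sum fun k _ => hk k
  have hsubset : Finset.univ.biUnion B ⊆ Finset.univ.filter (· < j) :=
    Finset.biUnion_subset.mpr fun k _ => hsub k
  have : (K : ℝ) * ε ^ 2 ≤ (j : ℝ) * β ^ 2 := by
    refine hbi.trans (le_trans ?_ hsum)
    exact Finset.sum_le_sum_of_subset_of_nonneg hsubset fun i _ _ => sq_nonneg _
  rw [le_div_iff₀ hε2]
  exact this
end

section
/- Let F be a function class on X with ε-Eluder dimension d_E = dim_E(F, ε). Then in any sequence x₁, …, x_n ∈ X, there exists an index j such that x_j is ε-dependent on at least n/d_E − 1 disjoint subsequences of (x₁, …, x_{j−1}). -/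
/-- An Eluder sequence: each element is `ε'`-independent of its predecessors
for some `ε' ≥ ε`. -/
def IsEluderSeq {X : Type*} (F : Set (X → ℝ)) (ε : ℝ) {m : ℕ}
    (x : Fin m → X) : Prop :=
  ∀ j : Fin m, ∃ ε' ≥ ε,
    ¬ EpsDependentOn F ε' (x j) (Finset.univ.filter (· < j)) x

/-- A finset whose elements are each independent of their predecessors within the
finset has cardinality at most the Eluder dimension. -/
lemma eluder_finset_card_le {X : Type*} (F : Set (X → ℝ)) (ε : ℝ) (dE : ℕ)
    (hdE : ∀ (m : ℕ) (x : Fin m → X), IsEluderSeq F ε x → m ≤ dE)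
    {n : ℕ} (x : Fin n → X) (s : Finset (Fin n))
    (hs : ∀ i ∈ s, ∃ ε' ≥ ε, ¬ EpsDependentOn F ε' (x i) (s.filter (· < i)) x) :
    s.card ≤ dE := by
  classical
  set e := s.orderIsoOfFin rfl with he
  apply hdE s.card (fun j => x (e j))
  intro j
  obtain ⟨ε', hε', hind⟩ := hs (e j) (e j).2
  refine ⟨ε', hε', fun hdep => hind ?_⟩
  intro f₁ h₁ f₂ h₂ hsum
  apply hdep f₁ h₁ f₂ h₂
  calc (∑ i ∈ Finset.univ.filter (· < j), (f₁ (x (e i)) - f₂ (x (e i))) ^ 2)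
      = ∑ i ∈ s.filter (· < (e j : Fin n)), (f₁ (x i) - f₂ (x i)) ^ 2 := by
        refine Finset.sum_bij (fun i _ => (e i : Fin n)) ?_ ?_ ?_ ?_
        · intro a ha
          simp only [Finset.mem_filter, Finset.mem_univ, true_and] at ha ⊢
          exact ⟨(e a).2, by exact_mod_cast (e.lt_iff_lt.mpr ha)⟩
        · intro a _ b _ hab
          have : (e a : Fin n) = (e b : Fin n) := hab
          exact e.injective (Subtype.ext this)
        · intro b hb
          simp only [Finset.mem_filter] at hb
          refine ⟨e.symm ⟨b, hb.1⟩, ?_, ?_⟩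
          · simp only [Finset.mem_filter, Finset.mem_univ, true_and]
            have : e (e.symm ⟨b, hb.1⟩) < e j := by
              rw [e.apply_symm_apply]
              exact hb.2
            exact e.lt_iff_lt.mp this
          · simp [e.apply_symm_apply]
        · intro a _
          rfl
    _ ≤ ε' ^ 2 := hsum

theorem stmt_10 {X : Type*} (F : Set (X → ℝ)) (ε : ℝ) (hε : 0 < ε)
    (dE : ℕ)
    (hdE : ∀ (m : ℕ) (x : Fin m → X), IsEluderSeq F ε x → m ≤ dE)
    {n : ℕ} (hn : 0 < n) (x : Fin n → X) :
    ∃ j : Fin n, ∃ K : ℕ, (n : ℝ) / dE - 1 ≤ K ∧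
      ∃ B : Fin K → Finset (Fin n),
        (∀ k, B k ⊆ Finset.univ.filter (· < j)) ∧
        Pairwise (Function.onFun Disjoint B) ∧
        ∀ k, EpsDependentOn F ε (x j) (B k) x := by
  classical
  set K := (n - 1) / dE with hK
  have hKd : K * dE ≤ n - 1 := Nat.div_mul_le_self _ _
  have hKge : (n : ℝ) / dE - 1 ≤ K := by
    rcases Nat.eq_zero_or_pos dE with hd0 | hd
    · simp only [hd0, Nat.cast_zero, div_zero, zero_sub]
      have : (0:ℝ) ≤ (K:ℝ) := Nat.cast_nonneg K
      linarith
    · have h1 : n - 1 = dE * K + (n - 1) % dE := (Nat.div_add_mod _ _).symm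
      have h2 : (n - 1) % dE < dE := Nat.mod_lt _ hd
      have h3 : n ≤ dE * K + dE := by omega
      have h3' : (n : ℝ) ≤ (dE : ℝ) * (K : ℝ) + (dE : ℝ) := by exact_mod_cast h3
      have hdR : (0 : ℝ) < dE := by exact_mod_cast hd
      rw [sub_le_iff_le_add, div_le_iff₀ hdR]
      calc (n : ℝ) ≤ (dE : ℝ) * (K : ℝ) + (dE : ℝ) := h3'
        _ = ((K : ℝ) + 1) * (dE : ℝ) := by ring
  suffices h : ∀ t, t ≤ n →
      (∃ j : Fin n, ∃ K' : ℕ, (n : ℝ) / dE - 1 ≤ K' ∧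
        ∃ B : Fin K' → Finset (Fin n),
          (∀ k, B k ⊆ Finset.univ.filter (· < j)) ∧
          Pairwise (Function.onFun Disjoint B) ∧
          ∀ k, EpsDependentOn F ε (x j) (B k) x) ∨
      (∃ B : Fin K → Finset (Fin n),
        (∀ k, ∀ i ∈ B k, (i : ℕ) < t) ∧
        Pairwise (Function.onFun Disjoint B) ∧
        (∀ i : Fin n, (i : ℕ) < t → ∃ k, i ∈ B k) ∧
        (∀ k, ∀ i ∈ B k, ∃ ε' ≥ ε,
          ¬ EpsDependentOn F ε' (x i) ((B k).filter (· < i)) x)) by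
    rcases h n le_rfl with hgoal | ⟨B, hbd, hdisj, hcov, hel⟩
    · exact hgoal
    · exfalso
      have hsub : (Finset.univ : Finset (Fin n)) ⊆ Finset.univ.biUnion B := by
        intro i _
        obtain ⟨k, hk⟩ := hcov i i.2
        exact Finset.mem_biUnion.mpr ⟨k, Finset.mem_univ k, hk⟩
      have h1 : n ≤ (Finset.univ.biUnion B).card := by
        calc n = (Finset.univ : Finset (Fin n)).card := by simp
          _ ≤ _ := Finset.card_le_card hsub
      have h2 : (Finset.univ.biUnion B).card ≤ ∑ k, (B k).card :=
        Finset.card_biUnion_le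
      have h3 : ∑ k, (B k).card ≤ K * dE := by
        calc ∑ k, (B k).card ≤ ∑ _k : Fin K, dE := by
              refine Finset.sum_le_sum fun k _ => ?_
              exact eluder_finset_card_le F ε dE hdE x (B k) (hel k)
          _ = K * dE := by simp [Finset.sum_const, mul_comm]
      omega
  intro t
  induction t with
  | zero =>
    intro _
    right
    exact ⟨fun _ => ∅, by simp, fun k k' _ => by simp [Function.onFun],
      by simp, by simp⟩
  | succ t ih =>
    intro ht
    rcases ih (Nat.le_of_succ_le ht) with hgoal | ⟨B, hbd, hdisj, hcov, hel⟩
    · exact Or.inl hgoal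
    · set j : Fin n := ⟨t, ht⟩ with hj
      by_cases hall : ∀ k, EpsDependentOn F ε (x j) (B k) x
      · left
        refine ⟨j, K, hKge, B, ?_, hdisj, hall⟩
        intro k i hi
        simp only [Finset.mem_filter, Finset.mem_univ, true_and]
        exact show (i : ℕ) < t from hbd k i hi
      · push_neg at hall
        obtain ⟨k₀, hk₀⟩ := hall
        right
        have hjnot : ∀ k, j ∉ B k := by
          intro k hjk
          exact absurd (hbd k j hjk) (by simp [hj])
        refine ⟨Function.update B k₀ (insert j (B k₀)), ?_, ?_, ?_, ?_⟩
        · intro k i hi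
          by_cases hk : k = k₀
          · subst hk
            rw [Function.update_self] at hi
            rcases Finset.mem_insert.mp hi with h | h
            · simp [h, hj]
            · exact Nat.lt_succ_of_lt (hbd _ _ h)
          · rw [Function.update_of_ne hk] at hi
            exact Nat.lt_succ_of_lt (hbd _ _ hi)
        · intro k k' hkk'
          have hbase : Disjoint (B k) (B k') := hdisj hkk'
          by_cases hk : k = k₀ <;> by_cases hk' : k' = k₀
          · exact absurd (hk.trans hk'.symm) hkk'
          · subst hk
            simp only [Function.onFun, Function.update_self,
              Function.update_of_ne hk']
            exact Finset.disjoint_insert_left.mpr ⟨hjnot k', hbase⟩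
          · subst hk'
            simp only [Function.onFun, Function.update_self,
              Function.update_of_ne hk]
            exact Finset.disjoint_insert_right.mpr ⟨hjnot k, hbase⟩
          · simp only [Function.onFun, Function.update_of_ne hk,
              Function.update_of_ne hk']
            exact hbase
        · intro i hi
          rcases Nat.lt_succ_iff_lt_or_eq.mp hi with h | h
          · obtain ⟨k, hk⟩ := hcov i h
            refine ⟨k, ?_⟩
            by_cases hkk : k = k₀
            · subst hkk
              rw [Function.update_self]
              exact Finset.mem_insert_of_mem hk
            · rwa [Function.update_of_ne hkk]
          · refine ⟨k₀, ?_⟩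
            rw [Function.update_self]
            have : i = j := Fin.ext h
            rw [this]
            exact Finset.mem_insert_self _ _
        · intro k i hi
          by_cases hk : k = k₀
          · subst hk
            rw [Function.update_self] at hi ⊢
            rcases Finset.mem_insert.mp hi with h | h
            · subst h
              refine ⟨ε, le_refl ε, ?_⟩
              have heq : (insert j (B k)).filter (· < j) = B k := by
                ext a
                simp only [Finset.mem_filter, Finset.mem_insert]
                constructor
                · rintro ⟨h1 | h1, h2⟩
                  · exact absurd h2 (by simp [h1])
                  · exact h1
                · intro ha
                  refine ⟨Or.inr ha, ?_⟩
                  exact show (a : ℕ) < (j : ℕ) from hbd k a ha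
              rw [heq]
              exact hk₀
            · obtain ⟨ε', hε', hind⟩ := hel k i h
              refine ⟨ε', hε', ?_⟩
              have heq : (insert j (B k)).filter (· < i) = (B k).filter (· < i) := by
                ext a
                simp only [Finset.mem_filter, Finset.mem_insert]
                constructor
                · rintro ⟨h1 | h1, h2⟩
                  · exfalso
                    subst h1
                    have hit : (i : ℕ) < t := hbd k i h
                    have h2' : (t : ℕ) < (i : ℕ) := h2
                    omega
                  · exact ⟨h1, h2⟩
                · rintro ⟨h1, h2⟩
                  exact ⟨Or.inr h1, h2⟩
              rw [heq]
              exact hind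
          · rw [Function.update_of_ne hk] at hi ⊢
            exact hel k i hi
end
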